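/- With notation as in the previous statement (κ > 0, γ_{n,m}, ξ_n, b_{n,k} with b_{n,0} = 0), let λ_n = n(−κ−n+1) and define V_0(t)ξ_n = Σ_{k=1}^∞ (t^k/k!) A_0^{k−1} ξ_n. Then d/dx [V_0(t) ξ_n](x)|_{x=0} = Σ_{k=1}^∞ (t^k/k!) b_{n,k−1}, and this series converges absolutely for every t ≥ 0. -/

import Mathlib

open Polynomial

/-- The degenerate Wright–Fisher generator A₀ = −κx d/dx + x(1−x) d²/dx². -/
noncomputable def wfGen (κ : ℝ) : Polynomial ℝ →ₗ[ℝ] Polynomial ℝ :=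
  (LinearMap.mulLeft ℝ (Polynomial.C (-κ) * Polynomial.X)).comp Polynomial.derivative
    + (LinearMap.mulLeft ℝ (Polynomial.X * (1 - Polynomial.X))).comp
        (Polynomial.derivative.comp Polynomial.derivative)

/-!
`ξ = Σ_{m=2}^n γ_m X^m` is an eigenvector of the Wright–Fisher generator up to a linear term:
the ratio condition on the `γ_m` makes `A₀ ξ = λ_n ξ + 2γ₂ X`, while `A₀ X = −κ X`. Hence
`A₀^k ξ = λ_n^k ξ + b_k X`, and since `ξ` has no linear term, the derivative at `0` is `b_k`.
The recursion gives `|b_k| ≤ k M^k`, so the series is dominated by `|t| e^{|t| M}`.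
-/

theorem LinearMap.pow_apply_eq_smul_add_smul {R M : Type*} [CommSemiring R] [AddCommMonoid M]
    [Module R M] (f : M →ₗ[R] M) {p q : M} {L a c : R} (hp : f p = L • p + c • q)
    (hq : f q = a • q) {b : ℕ → R} (hb0 : b 0 = 0) (hb : ∀ k, b (k + 1) = a * b k + L ^ k * c)
    (k : ℕ) : (f ^ k) p = L ^ k • p + b k • q := by
  induction k with
  | zero => simp [hb0]
  | succ k ih =>
    rw [pow_succ', Module.End.mul_apply, ih, map_add, map_smul, map_smul, hp, hq, hb]
    module

theorem abs_le_mul_pow_of_linear_recurrence {a L c : ℝ} {b : ℕ → ℝ} (hb0 : b 0 = 0)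
    (hb : ∀ k, b (k + 1) = a * b k + L ^ k * c) (k : ℕ) : |b k| ≤ k * (|a| + |L| + |c|) ^ k := by
  set M := |a| + |L| + |c|
  have ha : |a| ≤ M := by simp only [M]; linarith [abs_nonneg L, abs_nonneg c]
  have hL : |L| ≤ M := by simp only [M]; linarith [abs_nonneg a, abs_nonneg c]
  have hc : |c| ≤ M := by simp only [M]; linarith [abs_nonneg a, abs_nonneg L]
  induction k with
  | zero => simp [hb0]
  | succ k ih =>
    calc |b (k + 1)| ≤ |a| * |b k| + |L| ^ k * |c| := by
          rw [hb, ← abs_mul, ← abs_pow, ← abs_mul]; exact abs_add_le _ _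
      _ ≤ M * (k * M ^ k) + M ^ k * M := by gcongr
      _ = (k + 1 : ℕ) * M ^ (k + 1) := by push_cast; ring

theorem summable_abs_pow_succ_div_factorial_mul {b : ℕ → ℝ} {M : ℝ}
    (hb : ∀ k, |b k| ≤ k * M ^ k) (x : ℝ) :
    Summable fun k : ℕ => |x ^ (k + 1) / (k + 1).factorial * b k| := by
  have hM : 0 ≤ M := by simpa using (abs_nonneg _).trans (hb 1)
  refine .of_nonneg_of_le (fun _ => abs_nonneg _) (fun k => ?_)
    ((Real.summable_pow_div_factorial (|x| * M)).mul_left |x|)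
  have hk : (k : ℝ) ≤ k + 1 := by linarith
  calc |x ^ (k + 1) / (k + 1).factorial * b k|
      = |x| ^ (k + 1) / (k + 1).factorial * |b k| := by
        rw [abs_mul, abs_div, abs_pow, Nat.abs_cast]
    _ ≤ |x| ^ (k + 1) / (k + 1).factorial * ((k + 1) * M ^ k) := by
        gcongr; exact (hb k).trans (by gcongr)
    _ = |x| * ((|x| * M) ^ k / k.factorial) := by
        rw [Nat.factorial_succ]; push_cast; field_simp; ring

theorem Polynomial.derivative_eval_zero {R : Type*} [Semiring R] (p : R[X]) :
    (derivative p).eval 0 = p.coeff 1 := by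
  simp [← coeff_zero_eq_eval_zero, coeff_derivative]

theorem Polynomial.coeff_sum_C_mul_X_pow {R : Type*} [Semiring R] (s : Finset ℕ)
    (γ : ℕ → R) (j : ℕ) : (∑ m ∈ s, C (γ m) * X ^ m).coeff j = if j ∈ s then γ j else 0 := by
  simp [finsetSum_coeff]

/-- `λ_m = m(−κ−m+1)`: the factor by which `wfGen κ` scales the leading term of `X ^ m`. -/
def wfEigenvalue (κ : ℝ) (m : ℕ) : ℝ := m * (-κ - m + 1)

theorem wfGen_apply (κ : ℝ) (p : ℝ[X]) :
    wfGen κ p = C (-κ) * X * derivative p + X * (1 - X) * derivative (derivative p) := rfl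

theorem coeff_wfGen (κ : ℝ) (p : ℝ[X]) (j : ℕ) :
    (wfGen κ p).coeff j = wfEigenvalue κ j * p.coeff j + (j + 1) * j * p.coeff (j + 1) := by
  rw [wfGen_apply, wfEigenvalue, mul_sub, mul_one, ← pow_two, sub_mul]
  rcases j with _ | _ | j <;>
    simp [mul_assoc, coeff_derivative, coeff_X_mul, coeff_X_pow_mul'] <;> ring

theorem wfGen_sum_Icc_eq (κ : ℝ) {n : ℕ} (hn : 2 ≤ n) {γ : ℕ → ℝ}
    (hγ : ∀ m, 2 ≤ m → m < n →
      (wfEigenvalue κ n - wfEigenvalue κ m) * γ m = (m + 1) * m * γ (m + 1)) :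
    wfGen κ (∑ m ∈ Finset.Icc 2 n, C (γ m) * X ^ m)
      = wfEigenvalue κ n • ∑ m ∈ Finset.Icc 2 n, C (γ m) * X ^ m + (2 * γ 2) • X := by
  ext j
  simp only [coeff_wfGen, coeff_add, coeff_smul, coeff_sum_C_mul_X_pow, coeff_X, Finset.mem_Icc,
    smul_eq_mul]
  obtain rfl | rfl | hj | rfl | hj : j = 0 ∨ j = 1 ∨ (2 ≤ j ∧ j < n) ∨ n = j ∨ n < j := by omega
  · simp
  · norm_num [hn]
  · have := hγ j hj.1 hj.2
    simp [hj.1, hj.2.le, show j + 1 ≤ n by omega, show 1 ≤ j by omega, show 1 ≠ j by omega]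
    linarith
  · simp [hn, show 1 ≠ n by omega]
  · simp [show ¬ j ≤ n by omega, show ¬ j + 1 ≤ n by omega, show 1 ≠ j by omega]

theorem wfGen_X (κ : ℝ) : wfGen κ X = (-κ) • X := by
  simp [wfGen_apply, smul_eq_C_mul]

theorem wfEigenvalue_sub_mul_eq_of_ratio {κ : ℝ} {n : ℕ} {γ : ℕ → ℝ}
    (hden : ∀ m : ℕ, 2 ≤ m → m ≤ n →
      ((n : ℝ) * (-κ - n + 1) - ((m : ℝ) - 1) * (-κ - m + 2)) ≠ 0)
    (hγ : ∀ m : ℕ, 2 ≤ m → m ≤ n →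
      γ (m - 1) = ((m : ℝ) * ((m : ℝ) - 1))
          / ((n : ℝ) * (-κ - n + 1) - ((m : ℝ) - 1) * (-κ - m + 2)) * γ m)
    (m : ℕ) (hm : 2 ≤ m) (hmn : m < n) :
    (wfEigenvalue κ n - wfEigenvalue κ m) * γ m = (m + 1) * m * γ (m + 1) := by
  have hratio := hγ (m + 1) (by omega) hmn
  have hne := hden (m + 1) (by omega) hmn
  rw [Nat.add_sub_cancel] at hratio
  push_cast at hratio hne
  rw [hratio, wfEigenvalue, wfEigenvalue]
  field_simp
  ring

theorem stmt19_general (κ : ℝ) (n : ℕ) (hn : 2 ≤ n) (γ : ℕ → ℝ)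
    (hden : ∀ m : ℕ, 2 ≤ m → m ≤ n →
      ((n : ℝ) * (-κ - n + 1) - ((m : ℝ) - 1) * (-κ - m + 2)) ≠ 0)
    (hγ : ∀ m : ℕ, 2 ≤ m → m ≤ n →
      γ (m - 1) = ((m : ℝ) * ((m : ℝ) - 1))
          / ((n : ℝ) * (-κ - n + 1) - ((m : ℝ) - 1) * (-κ - m + 2)) * γ m)
    (b : ℕ → ℝ) (hb0 : b 0 = 0)
    (hb : ∀ k : ℕ, 1 ≤ k →
      b k = -κ * b (k - 1) + ((n : ℝ) * (-κ - n + 1)) ^ (k - 1) * (2 * γ 2))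
    (t : ℝ) :
    Summable (fun k : ℕ => |t ^ (k + 1) / (Nat.factorial (k + 1) : ℝ) * b k|)
    ∧ HasSum (fun k : ℕ => (t ^ (k + 1) / (Nat.factorial (k + 1) : ℝ))
          * ((derivative (((wfGen κ) ^ k)
              (∑ m ∈ Finset.Icc 2 n, Polynomial.C (γ m) * X ^ m))).eval 0))
        (∑' k : ℕ, (t ^ (k + 1) / (Nat.factorial (k + 1) : ℝ)) * b k) := by
  set L := wfEigenvalue κ n
  set ξ := ∑ m ∈ Finset.Icc 2 n, C (γ m) * X ^ m
  have hrec : ∀ k, b (k + 1) = -κ * b k + L ^ k * (2 * γ 2) := fun k => hb (k + 1) k.succ_pos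
  have hξ : wfGen κ ξ = L • ξ + (2 * γ 2) • X :=
    wfGen_sum_Icc_eq κ hn (wfEigenvalue_sub_mul_eq_of_ratio hden hγ)
  have hξ_linear : ξ.coeff 1 = 0 := by rw [coeff_sum_C_mul_X_pow, if_neg (by simp)]
  have hderiv (k : ℕ) : (derivative ((wfGen κ ^ k) ξ)).eval 0 = b k := by
    rw [LinearMap.pow_apply_eq_smul_add_smul _ hξ (wfGen_X κ) hb0 hrec, derivative_eval_zero,
      coeff_add, coeff_smul, coeff_smul, hξ_linear, coeff_X_one, smul_eq_mul, smul_eq_mul]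
    ring
  have hsum := summable_abs_pow_succ_div_factorial_mul
    (abs_le_mul_pow_of_linear_recurrence hb0 hrec) t
  simp only [hderiv]
  exact ⟨hsum, hsum.of_abs.hasSum⟩

/-- Theorem 3, equation (recursion-formula-for-derivative):
d/dx[V₀(t)ξₙ]|₀ = Σ_{k≥1} (tᵏ/k!) b_{k−1}, with absolute convergence. -/
theorem stmt19 (κ : ℝ) (hκ : 0 < κ) (n : ℕ) (hn : 2 ≤ n) (γ : ℕ → ℝ) (hγn : γ n = 1)
    (hden : ∀ m : ℕ, 2 ≤ m → m ≤ n →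
      ((n : ℝ) * (-κ - n + 1) - ((m : ℝ) - 1) * (-κ - m + 2)) ≠ 0)
    (hγ : ∀ m : ℕ, 2 ≤ m → m ≤ n →
      γ (m - 1) = ((m : ℝ) * ((m : ℝ) - 1))
          / ((n : ℝ) * (-κ - n + 1) - ((m : ℝ) - 1) * (-κ - m + 2)) * γ m)
    (b : ℕ → ℝ) (hb0 : b 0 = 0)
    (hb : ∀ k : ℕ, 1 ≤ k →
      b k = -κ * b (k - 1) + ((n : ℝ) * (-κ - n + 1)) ^ (k - 1) * (2 * γ 2))
    (t : ℝ) (ht : 0 ≤ t) :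
    Summable (fun k : ℕ => |t ^ (k + 1) / (Nat.factorial (k + 1) : ℝ) * b k|)
    ∧ HasSum (fun k : ℕ => (t ^ (k + 1) / (Nat.factorial (k + 1) : ℝ))
          * ((derivative (((wfGen κ) ^ k)
              (∑ m ∈ Finset.Icc 2 n, Polynomial.C (γ m) * X ^ m))).eval 0))
        (∑' k : ℕ, (t ^ (k + 1) / (Nat.factorial (k + 1) : ℝ)) * b k) :=
  stmt19_general κ n hn γ hden hγ b hb0 hb t
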